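/- Let β ≤ 0 and let u : ℝ → ℝ be a C⁴ function satisfying u''''(t) + β u''(t) + e^{u(t)} − 1 = 0 for all t ∈ ℝ. Assume that u(t) u'''(t) → 0, u'(t) u''(t) → 0 and u(t) u'(t) → 0 as t → ±∞, and that the functions t ↦ u''(t)², t ↦ u'(t)² and t ↦ (e^{u(t)} − 1) u(t) are integrable over ℝ. Then u(t) = 0 for all t ∈ ℝ; in particular, there are no nontrivial homoclinic orbits for β ≤ 0. -/

import Mathlib

/-!
Multiplying the equation by `u` suggests the flux `G = u u''' - u' u'' + β u u'`, whose derivative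
along a solution is `G' = -(eᵘ - 1) u - (u'')² + β (u')²`. For `β ≤ 0` every term is `≤ 0`, so `G`
is antitone; since it vanishes at both ends, `G ≡ 0`. Hence `G' ≡ 0`, which forces
`(eᵘ - 1) u ≡ 0`, i.e. `u ≡ 0`.
-/

open MeasureTheory Filter Topology

theorem Antitone.eq_of_tendsto_atBot_atTop {α β : Type*} [TopologicalSpace α] [PartialOrder α]
    [OrderClosedTopology α] [Preorder β] [IsDirectedOrder β] [IsCodirectedOrder β]
    {f : β → α} {a : α} (hf : Antitone f) (hbot : Tendsto f atBot (𝓝 a))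
    (htop : Tendsto f atTop (𝓝 a)) (b : β) : f b = a :=
  le_antisymm (hf.ge_of_tendsto hbot b) (hf.le_of_tendsto htop b)

theorem ContDiff.hasDerivAt_iteratedDeriv {𝕜 F : Type*} [NontriviallyNormedField 𝕜]
    [NormedAddCommGroup F] [NormedSpace 𝕜 F] {f : 𝕜 → F} {n m : ℕ} (hf : ContDiff 𝕜 n f)
    (hm : m < n) (x : 𝕜) : HasDerivAt (iteratedDeriv m f) (iteratedDeriv (m + 1) f x) x := by
  rw [iteratedDeriv_succ]
  exact (hf.differentiable_iteratedDeriv m (by exact_mod_cast hm) x).hasDerivAt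

theorem Real.exp_sub_one_mul_self_nonneg (x : ℝ) : 0 ≤ (Real.exp x - 1) * x := by
  rcases le_or_gt 0 x with h | h
  · exact mul_nonneg (sub_nonneg.2 (Real.one_le_exp_iff.2 h)) h
  · exact mul_nonneg_of_nonpos_of_nonpos (sub_nonpos.2 (Real.exp_le_one_iff.2 h.le)) h.le

theorem Real.exp_sub_one_mul_self_eq_zero_iff {x : ℝ} : (Real.exp x - 1) * x = 0 ↔ x = 0 := by
  simp [sub_eq_zero, Real.exp_eq_one_iff]

noncomputable def bridgeFlux (β : ℝ) (u : ℝ → ℝ) (t : ℝ) : ℝ :=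
  u t * iteratedDeriv 3 u t - deriv u t * iteratedDeriv 2 u t + β * (u t * deriv u t)

theorem hasDerivAt_bridgeFlux {β : ℝ} {u : ℝ → ℝ} (hu : ContDiff ℝ 4 u)
    (hode : ∀ t, iteratedDeriv 4 u t + β * iteratedDeriv 2 u t + Real.exp (u t) - 1 = 0)
    (t : ℝ) :
    HasDerivAt (bridgeFlux β u)
      (-((Real.exp (u t) - 1) * u t) - iteratedDeriv 2 u t ^ 2 + β * deriv u t ^ 2) t := by
  have h0 : HasDerivAt u (deriv u t) t := (hu.differentiable (by norm_num) t).hasDerivAt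
  have h1 : HasDerivAt (deriv u) (iteratedDeriv 2 u t) t := by
    simpa [iteratedDeriv_one] using hu.hasDerivAt_iteratedDeriv (m := 1) (by norm_num) t
  have h2 := hu.hasDerivAt_iteratedDeriv (m := 2) (by norm_num) t
  have h3 := hu.hasDerivAt_iteratedDeriv (m := 3) (by norm_num) t
  refine (((h0.mul h3).sub (h1.mul h2)).add ((h0.mul h1).const_mul β)).congr_deriv ?_
  linear_combination u t * hode t

theorem Filter.Tendsto.bridgeFlux {β : ℝ} {u : ℝ → ℝ} {l : Filter ℝ}
    (h3 : Tendsto (fun t => u t * iteratedDeriv 3 u t) l (𝓝 0))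
    (h2 : Tendsto (fun t => deriv u t * iteratedDeriv 2 u t) l (𝓝 0))
    (h1 : Tendsto (fun t => u t * deriv u t) l (𝓝 0)) :
    Tendsto (bridgeFlux β u) l (𝓝 0) := by
  have := (h3.sub h2).add (h1.const_mul β)
  rwa [sub_zero, mul_zero, add_zero] at this

theorem suspension_bridge_no_homoclinic_nonpositive_beta_general (β : ℝ) (hβ : β ≤ 0)
    (u : ℝ → ℝ) (hu : ContDiff ℝ 4 u)
    (hode : ∀ t : ℝ, iteratedDeriv 4 u t + β * iteratedDeriv 2 u t + Real.exp (u t) - 1 = 0)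
    (h3top : Tendsto (fun t => u t * iteratedDeriv 3 u t) atTop (nhds 0))
    (h3bot : Tendsto (fun t => u t * iteratedDeriv 3 u t) atBot (nhds 0))
    (h2top : Tendsto (fun t => deriv u t * iteratedDeriv 2 u t) atTop (nhds 0))
    (h2bot : Tendsto (fun t => deriv u t * iteratedDeriv 2 u t) atBot (nhds 0))
    (h1top : Tendsto (fun t => u t * deriv u t) atTop (nhds 0))
    (h1bot : Tendsto (fun t => u t * deriv u t) atBot (nhds 0)) :
    ∀ t : ℝ, u t = 0 := by
  have hsq : ∀ t, 0 ≤ iteratedDeriv 2 u t ^ 2 - β * deriv u t ^ 2 := fun t => by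
    nlinarith [sq_nonneg (iteratedDeriv 2 u t), sq_nonneg (deriv u t)]
  have hanti : Antitone (bridgeFlux β u) :=
    antitone_of_hasDerivAt_nonpos (hasDerivAt_bridgeFlux hu hode) fun t => by
      rw [Pi.zero_apply]; linarith [hsq t, Real.exp_sub_one_mul_self_nonneg (u t)]
  have hflux : bridgeFlux β u = fun _ => 0 := funext <|
    hanti.eq_of_tendsto_atBot_atTop (h3bot.bridgeFlux h2bot h1bot) (h3top.bridgeFlux h2top h1top)
  intro t
  have hderiv := (hasDerivAt_bridgeFlux hu hode t).unique (hflux ▸ hasDerivAt_const t 0)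
  refine Real.exp_sub_one_mul_self_eq_zero_iff.1 <|
    le_antisymm ?_ (Real.exp_sub_one_mul_self_nonneg (u t))
  linarith [hsq t]

/-- No nontrivial homoclinic orbits of the suspension bridge equation for `β ≤ 0`:
any solution decaying at infinity (in the sense of the stated limits and
integrability conditions) must be identically zero. -/
theorem suspension_bridge_no_homoclinic_nonpositive_beta (β : ℝ) (hβ : β ≤ 0)
    (u : ℝ → ℝ) (hu : ContDiff ℝ 4 u)
    (hode : ∀ t : ℝ, iteratedDeriv 4 u t + β * iteratedDeriv 2 u t + Real.exp (u t) - 1 = 0)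
    (h3top : Tendsto (fun t => u t * iteratedDeriv 3 u t) atTop (nhds 0))
    (h3bot : Tendsto (fun t => u t * iteratedDeriv 3 u t) atBot (nhds 0))
    (h2top : Tendsto (fun t => deriv u t * iteratedDeriv 2 u t) atTop (nhds 0))
    (h2bot : Tendsto (fun t => deriv u t * iteratedDeriv 2 u t) atBot (nhds 0))
    (h1top : Tendsto (fun t => u t * deriv u t) atTop (nhds 0))
    (h1bot : Tendsto (fun t => u t * deriv u t) atBot (nhds 0))
    (hi2 : Integrable (fun t => (iteratedDeriv 2 u t) ^ 2))
    (hi1 : Integrable (fun t => (deriv u t) ^ 2))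
    (hi0 : Integrable (fun t => (Real.exp (u t) - 1) * u t)) :
    ∀ t : ℝ, u t = 0 :=
  suspension_bridge_no_homoclinic_nonpositive_beta_general β hβ u hu hode h3top h3bot h2top h2bot
    h1top h1bot
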